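/- arXiv:2505.06065 — 4 statements merged into one kernel-verified Lean document; each statement's English description precedes it below -/
import Mathlib

section
/- Let a_1,a_2,a_3,a_4 be nonzero integers with gcd(a_1,a_4)=1, and let a_12,a_23,a_34 be integers satisfying the congruences a_3·a_23 ≡ a_1·a_12 (mod a_4) and a_4·a_34 ≡ a_2·a_23 (mod a_1). Then the rational numbers a_13 = (a_2·a_23 − a_4·a_34)/a_1, a_24 = (a_3·a_23 − a_1·a_12)/a_4, and a_14 = (a_2·a_3·a_23 − a_3·a_4·a_34 − a_1·a_2·a_12)/(a_1·a_4) are all integers. -/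
/- The numerator of a_14 is a_3 times that of a_13 plus a multiple of a_1, and also a_2 times that
of a_24 plus a multiple of a_4; so both a_1 and a_4 divide it, hence so does their product as they
are coprime. -/

theorem stmt_0_general (a1 a2 a3 a4 a12 a23 a34 : ℤ)
    (hcop : Int.gcd a1 a4 = 1)
    (hc1 : a4 ∣ a3 * a23 - a1 * a12)
    (hc2 : a1 ∣ a4 * a34 - a2 * a23) :
    a1 ∣ a2 * a23 - a4 * a34 ∧
    a4 ∣ a3 * a23 - a1 * a12 ∧
    a1 * a4 ∣ a2 * a3 * a23 - a3 * a4 * a34 - a1 * a2 * a12 := by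
  have h13 : a1 ∣ a2 * a23 - a4 * a34 := dvd_sub_comm.mp hc2
  refine ⟨h13, hc1, ?_⟩
  have h14_a1 : a1 ∣ a2 * a3 * a23 - a3 * a4 * a34 - a1 * a2 * a12 := by
    rw [show a2 * a3 * a23 - a3 * a4 * a34 - a1 * a2 * a12
        = a3 * (a2 * a23 - a4 * a34) - a1 * (a2 * a12) by ring]
    exact (h13.mul_left a3).sub (dvd_mul_right a1 _)
  have h14_a4 : a4 ∣ a2 * a3 * a23 - a3 * a4 * a34 - a1 * a2 * a12 := by
    rw [show a2 * a3 * a23 - a3 * a4 * a34 - a1 * a2 * a12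
        = a2 * (a3 * a23 - a1 * a12) - a4 * (a3 * a34) by ring]
    exact (hc1.mul_left a2).sub (dvd_mul_right a4 _)
  exact (Int.isCoprime_iff_gcd_eq_one.mpr hcop).mul_dvd h14_a1 h14_a4

theorem stmt_0 (a1 a2 a3 a4 a12 a23 a34 : ℤ)
    (ha1 : a1 ≠ 0) (ha2 : a2 ≠ 0) (ha3 : a3 ≠ 0) (ha4 : a4 ≠ 0)
    (hcop : Int.gcd a1 a4 = 1)
    (hc1 : a4 ∣ a3 * a23 - a1 * a12)
    (hc2 : a1 ∣ a4 * a34 - a2 * a23) :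
    a1 ∣ a2 * a23 - a4 * a34 ∧
    a4 ∣ a3 * a23 - a1 * a12 ∧
    a1 * a4 ∣ a2 * a3 * a23 - a3 * a4 * a34 - a1 * a2 * a12 :=
  stmt_0_general a1 a2 a3 a4 a12 a23 a34 hcop hc1 hc2
end

section
/- Let a_1,a_2,a_3,a_4 be nonzero integers and a_12,a_13,a_14,a_23,a_24,a_34 integers such that three of the five equations (1) a_4·a_14 − a_3·a_13 + a_2·a_12 = 0, (2) a_4·a_24 − a_3·a_23 + a_1·a_12 = 0, (3) a_4·a_34 − a_2·a_23 + a_1·a_13 = 0, (4) a_3·a_34 − a_2·a_24 + a_1·a_14 = 0, (5) a_12·a_34 − a_13·a_24 + a_23·a_14 = 0 hold, namely equations (2), (3), and (4). Then equations (1) and (5) also hold. -/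
theorem stmt_1 (a1 a2 a3 a4 a12 a13 a14 a23 a24 a34 : ℤ)
    (ha1 : a1 ≠ 0) (ha2 : a2 ≠ 0) (ha3 : a3 ≠ 0) (ha4 : a4 ≠ 0)
    (eq2 : a4 * a24 - a3 * a23 + a1 * a12 = 0)
    (eq3 : a4 * a34 - a2 * a23 + a1 * a13 = 0)
    (eq4 : a3 * a34 - a2 * a24 + a1 * a14 = 0) :
    a4 * a14 - a3 * a13 + a2 * a12 = 0 ∧
    a12 * a34 - a13 * a24 + a23 * a14 = 0 := by
  have h1 : a1 * (a4 * a14 - a3 * a13 + a2 * a12) = 0 := by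
    linear_combination a4 * eq4 - a3 * eq3 + a2 * eq2
  have e1 : a4 * a14 - a3 * a13 + a2 * a12 = 0 :=
    (mul_eq_zero.mp h1).resolve_left ha1
  refine ⟨e1, ?_⟩
  have h5 : a4 * (a12 * a34 - a13 * a24 + a23 * a14) = 0 := by
    linear_combination a12 * eq3 - a13 * eq2 + a23 * e1
  exact (mul_eq_zero.mp h5).resolve_left ha4
end

section
/- Let y_1, y_2, y_3 be coprime integers with y_1, y_2, y_3, y_1−y_2, y_1−y_3, y_2−y_3 all nonzero. Define a_1 = gcd(y_2,y_3), a_2 = gcd(y_1,y_3), a_3 = gcd(y_1,y_2), a_4 = gcd(y_1−y_2, y_1−y_3), and a_12 = y_3/(a_1·a_2), a_13 = y_2/(a_1·a_3), a_23 = y_1/(a_2·a_3), a_14 = (y_2−y_3)/(a_1·a_4), a_24 = (y_1−y_3)/(a_2·a_4), a_34 = (y_1−y_2)/(a_3·a_4). Then the five torsor equations hold: a_4·a_14 − a_3·a_13 + a_2·a_12 = 0, a_4·a_24 − a_3·a_23 + a_1·a_12 = 0, a_4·a_34 − a_2·a_23 + a_1·a_13 = 0, a_3·a_34 − a_2·a_24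 + a_1·a_14 = 0, and a_12·a_34 − a_13·a_24 + a_23·a_14 = 0. -/
theorem stmt_3 (y1 y2 y3 : ℤ)
    (hcop : Int.gcd (Int.gcd y1 y2) y3 = 1)
    (h1 : y1 ≠ 0) (h2 : y2 ≠ 0) (h3 : y3 ≠ 0)
    (h12 : y1 - y2 ≠ 0) (h13 : y1 - y3 ≠ 0) (h23 : y2 - y3 ≠ 0)
    (a1 a2 a3 a4 a12 a13 a14 a23 a24 a34 : ℤ)
    (ha1 : a1 = Int.gcd y2 y3) (ha2 : a2 = Int.gcd y1 y3)
    (ha3 : a3 = Int.gcd y1 y2) (ha4 : a4 = Int.gcd (y1 - y2) (y1 - y3))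
    (ha12 : a12 * (a1 * a2) = y3) (ha13 : a13 * (a1 * a3) = y2)
    (ha23 : a23 * (a2 * a3) = y1) (ha14 : a14 * (a1 * a4) = y2 - y3)
    (ha24 : a24 * (a2 * a4) = y1 - y3) (ha34 : a34 * (a3 * a4) = y1 - y2) :
    a4 * a14 - a3 * a13 + a2 * a12 = 0 ∧
    a4 * a24 - a3 * a23 + a1 * a12 = 0 ∧
    a4 * a34 - a2 * a23 + a1 * a13 = 0 ∧
    a3 * a34 - a2 * a24 + a1 * a14 = 0 ∧
    a12 * a34 - a13 * a24 + a23 * a14 = 0 := by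
  have hA1 : a1 ≠ 0 := by
    rw [ha1]; simp [Int.gcd_eq_zero_iff, h2]
  have hA2 : a2 ≠ 0 := by
    rw [ha2]; simp [Int.gcd_eq_zero_iff, h1]
  have hA3 : a3 ≠ 0 := by
    rw [ha3]; simp [Int.gcd_eq_zero_iff, h1]
  have hA4 : a4 ≠ 0 := by
    rw [ha4]; simp [Int.gcd_eq_zero_iff, h12]
  refine ⟨?_, ?_, ?_, ?_, ?_⟩
  · apply mul_left_cancel₀ hA1
    linear_combination ha14 - ha13 + ha12
  · apply mul_left_cancel₀ hA2
    linear_combination ha24 - ha23 + ha12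
  · apply mul_left_cancel₀ hA3
    linear_combination ha34 - ha23 + ha13
  · apply mul_left_cancel₀ hA4
    linear_combination ha34 - ha24 + ha14
  · apply mul_left_cancel₀ (mul_ne_zero (mul_ne_zero (mul_ne_zero hA1 hA2) hA3) hA4)
    linear_combination (a34 * a3 * a4) * ha12 - (a24 * a2 * a4) * ha13 + (a14 * a1 * a4) * ha23 - y2 * ha24 + y3 * ha34 + y1 * ha14
end

section
/- Let d_1, d_2, d_3, d_4 be positive integers. Then gcd([d_3;d_4]·e_1·e_2, n·[d_1;d_3]) = e_1·[d_3; gcd(d_1,d_4)] whenever e_1 | n, gcd(e_1, d_1 d_2 d_3 d_4 e_2) = 1, gcd(e_2, n) = 1, gcd(d_1, n) = gcd(d_3, n) = gcd(d_4, n) = 1, the d_i are squarefree, and e_2 is coprime to d_1 d_3 d_4. (Here [x;y] is the lcm.) -/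
lemma gcd_lcm_lcm_aux (a b c : ℕ) (ha : a ≠ 0) (hb : b ≠ 0) (hc : c ≠ 0) :
    Nat.gcd (Nat.lcm a b) (Nat.lcm a c) = Nat.lcm a (Nat.gcd b c) := by
  have hab : Nat.lcm a b ≠ 0 := Nat.lcm_ne_zero ha hb
  have hac : Nat.lcm a c ≠ 0 := Nat.lcm_ne_zero ha hc
  have hbc : Nat.gcd b c ≠ 0 := Nat.gcd_ne_zero_left hb
  apply Nat.eq_of_factorization_eq (Nat.gcd_ne_zero_left hab) (Nat.lcm_ne_zero ha hbc)
  intro p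
  rw [Nat.factorization_gcd hab hac, Nat.factorization_lcm ha hbc,
    Nat.factorization_lcm ha hb, Nat.factorization_lcm ha hc, Nat.factorization_gcd hb hc]
  simp [sup_inf_left]

theorem stmt_13 (d1 d2 d3 d4 e1 e2 n : ℕ)
    (hd1 : 0 < d1) (hd2 : 0 < d2) (hd3 : 0 < d3) (hd4 : 0 < d4)
    (he1 : 0 < e1) (he2 : 0 < e2) (hn : 0 < n)
    (hsq1 : Squarefree d1) (hsq2 : Squarefree d2) (hsq3 : Squarefree d3) (hsq4 : Squarefree d4)
    (he1n : e1 ∣ n)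
    (he1cop : Nat.Coprime e1 (d1 * d2 * d3 * d4 * e2))
    (he2cop : Nat.Coprime e2 (n * d1 * d3 * d4))
    (hd1n : Nat.Coprime d1 n) (hd3n : Nat.Coprime d3 n) (hd4n : Nat.Coprime d4 n) :
    Nat.gcd (Nat.lcm d3 d4 * e1 * e2) (n * Nat.lcm d1 d3) = e1 * Nat.lcm d3 (Nat.gcd d1 d4) := by
  obtain ⟨n', rfl⟩ := he1n
  -- e2 coprime to (e1*n') * lcm d1 d3
  have hM : Nat.lcm d1 d3 ∣ d1 * d3 := Nat.lcm_dvd (Dvd.intro _ rfl) (Dvd.intro_left _ rfl)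
  have he2M : Nat.Coprime e2 (e1 * n' * Nat.lcm d1 d3) := by
    refine Nat.Coprime.coprime_dvd_right ?_ he2cop
    calc e1 * n' * Nat.lcm d1 d3 ∣ e1 * n' * (d1 * d3) := mul_dvd_mul_left _ hM
      _ ∣ e1 * n' * d1 * d3 * d4 := by ring_nf; exact Dvd.intro _ rfl
  have step1 : Nat.gcd (Nat.lcm d3 d4 * e1 * e2) (e1 * n' * Nat.lcm d1 d3)
      = Nat.gcd (Nat.lcm d3 d4 * e1) (e1 * n' * Nat.lcm d1 d3) :=
    Nat.Coprime.gcd_mul_right_cancel _ he2M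
  -- lcm d3 d4 coprime to n'
  have hLn' : Nat.Coprime (Nat.lcm d3 d4) n' := by
    have h3 : Nat.Coprime d3 n' := Nat.Coprime.coprime_dvd_right (Dvd.intro_left _ rfl) hd3n
    have h4 : Nat.Coprime d4 n' := Nat.Coprime.coprime_dvd_right (Dvd.intro_left _ rfl) hd4n
    exact Nat.Coprime.coprime_dvd_left (Nat.lcm_dvd (Dvd.intro _ rfl) (Dvd.intro_left _ rfl))
      (Nat.Coprime.mul h3 h4)
  have step2 : Nat.gcd (Nat.lcm d3 d4 * e1) (e1 * n' * Nat.lcm d1 d3)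
      = e1 * Nat.gcd (Nat.lcm d3 d4) (Nat.lcm d1 d3) := by
    rw [mul_comm (Nat.lcm d3 d4) e1, mul_assoc e1 n' (Nat.lcm d1 d3), Nat.gcd_mul_left]
    congr 1
    exact Nat.Coprime.gcd_mul_left_cancel_right _ hLn'.symm
  have hd30 := hd3.ne'
  have step3 : Nat.gcd (Nat.lcm d3 d4) (Nat.lcm d1 d3) = Nat.lcm d3 (Nat.gcd d1 d4) := by
    rw [Nat.lcm_comm d1 d3, gcd_lcm_lcm_aux d3 d4 d1 hd30 hd4.ne' hd1.ne', Nat.gcd_comm]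
  rw [step1, step2, step3]
end
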